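/- Let (φ_t) be a non-elliptic semigroup in the unit disc 𝔻 with Koenigs function h. If h(𝔻) is starlike with respect to h(0), i.e. for every w ∈ h(𝔻) the segment {(1−s)h(0) + s·w : s ∈ [0,1]} is contained in h(𝔻), then the total speed t ↦ v(t) is non-decreasing on [0,+∞). -/

import Mathlib

open Complex Filter Topology Set MeasureTheory

noncomputable section

/-- The unit disc in the complex plane. -/
def unitDisc : Set ℂ := {z : ℂ | ‖z‖ < 1}

/-- The inverse hyperbolic tangent: `arctanh x = (1/2)·log((1+x)/(1−x))`. -/
def arctanh (x : ℝ) : ℝ := (1 / 2) * Real.log ((1 + x) / (1 - x))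

/-- The hyperbolic distance on the unit disc:
`k_𝔻(z,w) = arctanh |(z−w)/(1−conj(z)·w)|`. -/
def kD (z w : ℂ) : ℝ :=
  arctanh (‖(z - w) / (1 - (starRingEnd ℂ) z * w)‖)

/-- `φ` is a continuous one-parameter semigroup of holomorphic self-maps of the unit disc. -/
structure IsDiscSemigroup (φ : ℝ → ℂ → ℂ) : Prop where
  mapsTo : ∀ t : ℝ, 0 ≤ t → Set.MapsTo (φ t) unitDisc unitDisc
  holo : ∀ t : ℝ, 0 ≤ t → DifferentiableOn ℂ (φ t) unitDisc
  id0 : ∀ z ∈ unitDisc, φ 0 z = z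
  comp : ∀ s t : ℝ, 0 ≤ s → 0 ≤ t → ∀ z ∈ unitDisc, φ (t + s) z = φ t (φ s z)
  cont : ContinuousOn (fun p : ℝ × ℂ => φ p.1 p.2) (Set.Ici 0 ×ˢ unitDisc)

/-- A semigroup in the disc is non-elliptic if it has no fixed point in the disc
for positive times. -/
structure IsNonElliptic (φ : ℝ → ℂ → ℂ) extends IsDiscSemigroup φ : Prop where
  noFixedPoint : ∀ t : ℝ, 0 < t → ∀ z ∈ unitDisc, φ t z ≠ z

/-- `τ` is the Denjoy-Wolff point of the semigroup `φ`: a boundary point to which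
all orbits converge. -/
def IsDenjoyWolff (φ : ℝ → ℂ → ℂ) (τ : ℂ) : Prop :=
  ‖τ‖ = 1 ∧ ∀ z ∈ unitDisc, Tendsto (fun t => φ t z) atTop (𝓝 τ)

/-- `h` is a Koenigs function of the semigroup `φ`: univalent on the disc with
`h(φ_t(z)) = h(z) + it`. -/
def IsKoenigs (φ : ℝ → ℂ → ℂ) (h : ℂ → ℂ) : Prop :=
  DifferentiableOn ℂ h unitDisc ∧ Set.InjOn h unitDisc ∧
    ∀ t : ℝ, 0 ≤ t → ∀ z ∈ unitDisc, h (φ t z) = h z + Complex.I * t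

/-- `p` is the hyperbolic orthogonal projection onto the geodesic `(−1,1)·τ`:
for every `z` in the disc, `p z` lies on the geodesic and minimizes the hyperbolic
distance from `z` to the geodesic. -/
def IsOrthProjection (τ : ℂ) (p : ℂ → ℂ) : Prop :=
  ∀ z ∈ unitDisc,
    (∃ r : ℝ, r ∈ Set.Ioo (-1 : ℝ) 1 ∧ p z = (r : ℂ) * τ) ∧
    ∀ r : ℝ, r ∈ Set.Ioo (-1 : ℝ) 1 → kD z (p z) ≤ kD z ((r : ℂ) * τ)

/-- The total speed `v(t) = k_𝔻(0, φ_t(0))` of a semigroup. -/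
def totalSpeed (φ : ℝ → ℂ → ℂ) (t : ℝ) : ℝ := kD 0 (φ t 0)

/-- The orthogonal speed `v^o(t) = k_𝔻(0, π(φ_t(0)))` of a semigroup, relative to the
orthogonal projection `p` onto the geodesic `(−1,1)·τ`. -/
def orthSpeed (φ : ℝ → ℂ → ℂ) (p : ℂ → ℂ) (t : ℝ) : ℝ := kD 0 (p (φ t 0))

/-- `δ⁺(t)`: the truncated distance from `z₀ + it` to the part of the complement of `Ω`
lying to the right of the vertical line through `z₀`. -/
def deltaPlus (Ω : Set ℂ) (z₀ : ℂ) (t : ℝ) : ℝ :=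
  min t (sInf {d : ℝ | ∃ w : ℂ, w ∉ Ω ∧ z₀.re ≤ w.re ∧ d = ‖w - (z₀ + Complex.I * t)‖})

/-- `δ⁻(t)`: the truncated distance from `z₀ + it` to the part of the complement of `Ω`
lying to the left of the vertical line through `z₀`. -/
def deltaMinus (Ω : Set ℂ) (z₀ : ℂ) (t : ℝ) : ℝ :=
  min t (sInf {d : ℝ | ∃ w : ℂ, w ∉ Ω ∧ w.re ≤ z₀.re ∧ d = ‖w - (z₀ + Complex.I * t)‖})

/-- `Ω` is quasi-symmetric with respect to vertical axes. -/
def QuasiSymmetric (Ω : Set ℂ) : Prop :=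
  ∃ z₀ ∈ Ω, ∃ K : ℝ, 0 < K ∧ ∀ t : ℝ, 0 ≤ t →
    K⁻¹ * deltaMinus Ω z₀ t ≤ deltaPlus Ω z₀ t ∧ deltaPlus Ω z₀ t ≤ K * deltaMinus Ω z₀ t

/-- `Ω` is starlike with respect to `w₀`: every segment from `w₀` to a point of `Ω`
is contained in `Ω`. -/
def StarlikeWrt (Ω : Set ℂ) (w₀ : ℂ) : Prop :=
  ∀ w ∈ Ω, ∀ s : ℝ, s ∈ Set.Icc (0 : ℝ) 1 → (1 - (s : ℂ)) * w₀ + (s : ℂ) * w ∈ Ω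

/-- The orbit of `0` converges non-tangentially to `τ`:
`limsup_{t→+∞} |τ − φ_t(0)|/(1 − |φ_t(0)|) < +∞`. -/
def ConvergesNonTangentially (φ : ℝ → ℂ → ℂ) (τ : ℂ) : Prop :=
  Filter.limsup (fun t : ℝ =>
    ((‖τ - φ t 0‖ / (1 - ‖φ t 0‖) : ℝ) : EReal)) atTop < ⊤

/-- `f` is eventually non-decreasing. -/
def EventuallyNondecreasing (f : ℝ → ℝ) : Prop :=
  ∃ T : ℝ, ∀ s t : ℝ, T ≤ s → s ≤ t → f s ≤ f t

/-- The Cayley transform from the unit disc to the right half-plane. -/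
def cayley (z : ℂ) : ℂ := (1 + z) / (1 - z)

/-- The inverse Cayley transform, from the right half-plane to the unit disc. -/
def cayleyInv (w : ℂ) : ℂ := (w - 1) / (w + 1)

/-- `Θ_ρ := {iy : y ∈ ℝ, |y| ≥ ρ}`, a subset of the imaginary axis. -/
def Theta (ρ : ℝ) : Set ℂ := {z : ℂ | ∃ y : ℝ, z = Complex.I * (y : ℂ) ∧ ρ ≤ |y|}

/-- `Γ*_t := {iy : |y| ≥ inf_{u ≥ t} ρ_u}`. -/
def GammaStar (ρ : ℝ → ℝ) (t : ℝ) : Set ℂ :=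
  {z : ℂ | ∃ y : ℝ, z = Complex.I * (y : ℂ) ∧ sInf {r : ℝ | ∃ u : ℝ, t ≤ u ∧ r = ρ u} ≤ |y|}

/-- The harmonic measure at `w` (a point of the right half-plane) of a Borel subset `E`
of the imaginary axis, with respect to the right half-plane:
`ω(w,E,ℍ) = (1/π) ∫_{{s : is ∈ E}} Re w/((Re w)² + (Im w − s)²) ds`. -/
def omegaH (w : ℂ) (E : Set ℂ) : ℝ :=
  (1 / Real.pi) *
    ∫ s in {s : ℝ | Complex.I * (s : ℂ) ∈ E}, w.re / (w.re ^ 2 + (w.im - s) ^ 2)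

/-- The Euclidean arclength of the closed arc of the unit circle containing `1`
with endpoints `a` and `conj a` (where `Im a > 0`), namely `2·arg a`. -/
def arcLength (a : ℂ) : ℝ := 2 * Complex.arg a

/-- The harmonic measure at `0` with respect to the unit disc of the closed arc of the
unit circle containing `1` with endpoints `a` and `conj a`: `ℓ(A)/(2π)`. -/
def omegaDiscZero (a : ℂ) : ℝ := arcLength a / (2 * Real.pi)

/-- `Π_α := {z ∈ ℂ : Im z > |Re z|^α}`. -/
def PiDom (α : ℝ) : Set ℂ := {z : ℂ | |z.re| ^ α < z.im}

/-- `W(θ) := {z ≠ 0 : arg z ∈ (π/2 − θ, π/2)}`. -/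
def Wsector (θ : ℝ) : Set ℂ :=
  {z : ℂ | z ≠ 0 ∧ Complex.arg z ∈ Set.Ioo (Real.pi / 2 - θ) (Real.pi / 2)}

/-- `Ξ(α,θ) := ({Re z ≤ 0} ∩ Π_α) ∪ W(θ)`. -/
def Xi (α θ : ℝ) : Set ℂ := ({z : ℂ | z.re ≤ 0} ∩ PiDom α) ∪ Wsector θ

/-!
For `0 ≤ s ≤ t` write `s = u t` with `u ∈ [0, 1]`. Since `h(𝔻)` is starlike with respect to
`h(0)`, the map `z ↦ h⁻¹((1 - u) h(0) + u h(z))` is a holomorphic self-map of `𝔻` fixing `0`,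
and it sends `φ_t(0)` to `φ_s(0)` because `h(φ_t(0)) = h(0) + it`. Schwarz's lemma gives
`|φ_s(0)| ≤ |φ_t(0)|`, and `k_𝔻(0, w)` increases with `|w|`.
-/

open Function Metric

namespace Set.InjOn

variable {f : ℂ → ℂ} {s : Set ℂ} {z₀ : ℂ}

theorem not_eventually_eq (hs : s ∈ 𝓝 z₀) (hinj : InjOn f s) :
    ¬ ∀ᶠ z in 𝓝 z₀, f z = f z₀ := by
  intro hev
  have hev' : ∀ᶠ z in 𝓝[≠] z₀, f z = f z₀ ∧ z ∈ s :=
    (hev.and hs).filter_mono nhdsWithin_le_nhds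
  obtain ⟨z, ⟨hfz, hz⟩, hne⟩ := (hev'.and self_mem_nhdsWithin).exists
  exact hne (hinj hz (mem_of_mem_nhds hs) hfz)

variable (hs : IsOpen s) (hd : DifferentiableOn ℂ f s) (hinj : InjOn f s)
include hs hd hinj

theorem eventually_deriv_ne_zero (hz₀ : z₀ ∈ s) :
    ∀ᶠ z in 𝓝[≠] z₀, deriv f z ≠ 0 := by
  have han : AnalyticAt ℂ (deriv f) z₀ := (hd.analyticAt (hs.mem_nhds hz₀)).deriv
  refine han.eventually_eq_zero_or_eventually_ne_zero.resolve_left fun hzero => ?_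
  obtain ⟨r, hr, hball⟩ :=
    eventually_nhds_iff_ball.mp (hzero.and (hs.eventually_mem hz₀))
  refine hinj.not_eventually_eq (hs.mem_nhds hz₀)
    (eventually_of_mem (ball_mem_nhds z₀ hr) fun z hz => ?_)
  exact isOpen_ball.is_const_of_deriv_eq_zero (convex_ball z₀ r).isPreconnected
    (hd.mono fun w hw => (hball w hw).2) (fun w hw => (hball w hw).1) hz (mem_ball_self hr)

theorem image_mem_nhds (hz₀ : z₀ ∈ s) {U : Set ℂ} (hU : U ∈ 𝓝 z₀) :
    f '' U ∈ 𝓝 (f z₀) :=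
  ((hd.analyticAt (hs.mem_nhds hz₀)).eventually_constant_or_nhds_le_map_nhds.resolve_left
    (hinj.not_eventually_eq (hs.mem_nhds hz₀))) (image_mem_map hU)

theorem continuousAt_invFunOn (hz₀ : z₀ ∈ s) : ContinuousAt (invFunOn f s) (f z₀) := by
  rw [ContinuousAt, hinj.leftInvOn_invFunOn hz₀]
  intro U hU
  have himg := image_mem_nhds hs hd hinj hz₀ (inter_mem hU (hs.mem_nhds hz₀))
  refine mem_map.mpr (mem_of_superset himg ?_)
  rintro _ ⟨z, hz, rfl⟩
  rw [mem_preimage, hinj.leftInvOn_invFunOn hz.2]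
  exact hz.1

theorem differentiableAt_invFunOn_of_deriv_ne_zero {z : ℂ} (hz : z ∈ s)
    (hf' : deriv f z ≠ 0) : DifferentiableAt ℂ (invFunOn f s) (f z) := by
  have hfg : ∀ᶠ w in 𝓝 (f z), f (invFunOn f s w) = w := by
    filter_upwards [image_mem_nhds hs hd hinj hz (hs.mem_nhds hz)] with w hw
    exact invFunOn_eq hw
  have hf : HasDerivAt f (deriv f z) (invFunOn f s (f z)) := by
    rw [hinj.leftInvOn_invFunOn hz]
    exact (hd.differentiableAt (hs.mem_nhds hz)).hasDerivAt
  exact (hf.of_local_left_inverse (continuousAt_invFunOn hs hd hinj hz) hf' hfg).differentiableAt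

/-- Critical points of `f` are isolated, so at their images `invFunOn f s` is continuous and
differentiable on a punctured neighbourhood, and the singularity is removable. -/
theorem differentiableOn_invFunOn : DifferentiableOn ℂ (invFunOn f s) (f '' s) := by
  rintro _ ⟨z₀, hz₀, rfl⟩
  refine DifferentiableAt.differentiableWithinAt ?_
  set V := {z | z ∈ s ∧ (z ≠ z₀ → deriv f z ≠ 0)}
  have hV : V ∈ 𝓝 z₀ := (hs.eventually_mem hz₀).and
    (eventually_nhdsWithin_iff.mp (eventually_deriv_ne_zero hs hd hinj hz₀))
  have hfV := image_mem_nhds hs hd hinj hz₀ hV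
  refine ((differentiableOn_compl_singleton_and_continuousAt_iff hfV).mp
    ⟨?_, continuousAt_invFunOn hs hd hinj hz₀⟩).differentiableAt hfV
  rintro _ ⟨⟨z, ⟨hzs, hz⟩, rfl⟩, hne⟩
  exact (differentiableAt_invFunOn_of_deriv_ne_zero hs hd hinj hzs
    (hz (by rintro rfl; exact hne rfl))).differentiableWithinAt

end Set.InjOn

theorem unitDisc_eq_ball : unitDisc = ball (0 : ℂ) 1 := by
  ext z
  simp [unitDisc]

theorem arctanh_le_arctanh {x y : ℝ} (hx : -1 < x) (hxy : x ≤ y) (hy : y < 1) :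
    arctanh x ≤ arctanh y := by
  unfold arctanh
  refine mul_le_mul_of_nonneg_left (Real.log_le_log ?_ ?_) (by norm_num)
  · have : 0 < 1 - x := by linarith
    have : 0 < 1 + x := by linarith
    positivity
  · rw [div_le_div_iff₀ (by linarith) (by linarith)]
    nlinarith

theorem kD_zero_le_kD_zero {z w : ℂ} (hzw : ‖z‖ ≤ ‖w‖) (hw : ‖w‖ < 1) :
    kD 0 z ≤ kD 0 w := by
  simpa [kD] using arctanh_le_arctanh (by linarith [norm_nonneg z]) hzw hw

theorem norm_le_norm_of_starlike {h : ℂ → ℂ} (hd : DifferentiableOn ℂ h unitDisc)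
    (hinj : InjOn h unitDisc) (hstar : StarlikeWrt (h '' unitDisc) (h 0)) {u : ℝ}
    (hu : u ∈ Icc (0 : ℝ) 1) {z w : ℂ} (hz : z ∈ unitDisc) (hw : w ∈ unitDisc)
    (hzw : h w = (1 - u) * h 0 + u * h z) : ‖w‖ ≤ ‖z‖ := by
  rw [unitDisc_eq_ball] at hd hinj hstar hz hw
  set G : ℂ → ℂ := fun z => invFunOn h (ball 0 1) ((1 - u) * h 0 + u * h z)
  have hmem : ∀ z ∈ ball (0 : ℂ) 1, (1 - u) * h 0 + u * h z ∈ h '' ball 0 1 :=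
    fun z hz => hstar _ (mem_image_of_mem h hz) u hu
  have hGd : DifferentiableOn ℂ G (ball 0 1) :=
    (hinj.differentiableOn_invFunOn isOpen_ball hd).comp ((hd.const_mul _).const_add _) hmem
  have hGmaps : MapsTo G (ball 0 1) (closedBall 0 1) :=
    fun z hz => ball_subset_closedBall (invFunOn_mem (hmem z hz))
  have hG0 : G 0 = 0 := by
    simp only [G, ← add_mul, sub_add_cancel, one_mul]
    exact hinj.leftInvOn_invFunOn (mem_ball_self one_pos)
  have hGz : G z = w := by
    simp only [G, ← hzw]
    exact hinj.leftInvOn_invFunOn hw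
  simpa [hGz] using
    Complex.norm_le_norm_of_mapsTo_ball hGd hGmaps hG0 (mem_ball_zero_iff.mp hz)

/-- **Proposition 3.4:** if the image of the Koenigs function is starlike with respect to
`h(0)`, the total speed is non-decreasing on `[0,+∞)`. -/
theorem totalSpeed_monotoneOn_of_starlike
    (φ : ℝ → ℂ → ℂ) (h : ℂ → ℂ)
    (hφ : IsNonElliptic φ) (hKoe : IsKoenigs φ h)
    (hstar : StarlikeWrt (h '' unitDisc) (h 0)) :
    MonotoneOn (totalSpeed φ) (Set.Ici (0 : ℝ)) := by
  obtain ⟨hd, hinj, hshift⟩ := hKoe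
  have h0 : (0 : ℂ) ∈ unitDisc := by simp [unitDisc]
  intro s hs t ht hst
  obtain ⟨u, hu, rfl⟩ : ∃ u ∈ Icc (0 : ℝ) 1, u * t = s := by
    rcases (show (0 : ℝ) ≤ t from ht).eq_or_lt with rfl | htpos
    · exact ⟨0, left_mem_Icc.mpr zero_le_one, by linarith [le_antisymm hst hs]⟩
    · exact ⟨s / t, ⟨div_nonneg hs htpos.le, (div_le_one htpos).mpr hst⟩,
        div_mul_cancel₀ s htpos.ne'⟩
  have hzt : φ t 0 ∈ unitDisc := hφ.mapsTo t ht h0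
  have hhu : h (φ (u * t) 0) = (1 - u) * h 0 + u * h (φ t 0) := by
    rw [hshift _ hs _ h0, hshift _ ht _ h0]
    push_cast
    ring
  exact kD_zero_le_kD_zero
    (norm_le_norm_of_starlike hd hinj hstar hu hzt (hφ.mapsTo _ hs h0) hhu) hzt

end
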